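/- Let I be an NAE3SAT instance over a finite variable set X, where each clause is an ordered triple of literals whose underlying variables are pairwise distinct. Let 𝔾(I) be the graph constructed from I as described below. Then: (a) 𝔾(I) has a proper 3-colouring if and only if there is an assignment ν : X → Bool NAE-satisfying I; (b) every edge of 𝔾(I) lies in a 3-clique; (c) 𝔾(I) contains no 4-cycle, i.e., there do not exist four pairwise distinct vertices u₀, u₁, u₂, u₃ with u₀ adjacent to u₁, u₁ to u₂, u₂ to u₃, and u₃ to u₀. -/

import Mathlib

/-- A literal over variable set `X`: a variable with a sign (`true` = positive). -/
abbrev NLit (X : Type) := X × Bool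

/-- A clause: an ordered triple of literals. -/
abbrev NClause (X : Type) := Fin 3 → NLit X

/-- The value of a literal under an assignment. -/
def nlitVal {X : Type} (ν : X → Bool) (l : NLit X) : Bool :=
  if l.2 then ν l.1 else !(ν l.1)

/-- `ν` NAE-satisfies the instance `I` if on every clause the three literal values are
not all equal. -/
def NAESat3 {X : Type} (I : Finset (NClause X)) (ν : X → Bool) : Prop :=
  ∀ e ∈ I, ¬(nlitVal ν (e 0) = nlitVal ν (e 1) ∧ nlitVal ν (e 1) = nlitVal ν (e 2))

/-- The vertices of the graph `𝔾(I)`: a special vertex (`Sum.inl`), the literal vertices,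
the clause position vertices, and the connector vertices. -/
abbrev GVert {X : Type} (I : Finset (NClause X)) : Type :=
  Unit ⊕ (X × Bool) ⊕ ({e : NClause X // e ∈ I} × Fin 3) ⊕ ({e : NClause X // e ∈ I} × Fin 3)

/-- The base edge relation of `𝔾(I)`: the special vertex is adjacent to every literal
vertex; the two literal vertices of a variable are adjacent; the three clause position
vertices of a clause are pairwise adjacent; and for each clause `e` and position `i`, the
literal vertex of the `i`-th literal of `e`, the connector vertex `c_{e,i}` and the clause
position vertex `(e,i)` are pairwise adjacent. -/
def gRel {X : Type} (I : Finset (NClause X)) : GVert I → GVert I → Prop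
  | Sum.inl _, Sum.inr (Sum.inl _) => True
  | Sum.inr (Sum.inl (v, s)), Sum.inr (Sum.inl (v', s')) => v = v' ∧ s ≠ s'
  | Sum.inr (Sum.inl l), Sum.inr (Sum.inr (Sum.inl (e, i))) => l = e.1 i
  | Sum.inr (Sum.inl l), Sum.inr (Sum.inr (Sum.inr (e, i))) => l = e.1 i
  | Sum.inr (Sum.inr (Sum.inl (e, _))), Sum.inr (Sum.inr (Sum.inl (e', _))) => e = e'
  | Sum.inr (Sum.inr (Sum.inr (e, i))), Sum.inr (Sum.inr (Sum.inl (e', i'))) =>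
      e = e' ∧ i = i'
  | _, _ => False

/-- The graph `𝔾(I)` constructed from an NAE3SAT instance `I`. -/
def GI {X : Type} (I : Finset (NClause X)) : SimpleGraph (GVert I) :=
  SimpleGraph.fromRel (gRel I)

/-
Colour `a` with one colour; the literal vertices then carry the two others, complementary
literals different ones, so the colouring encodes an assignment. A clause whose three literals
are equal under it would leave only two colours for its clause triangle. Conversely, when the
literals of a clause are not all equal, its clause triangle can be coloured so that each
position avoids the colour of its literal, and each connector takes the colour left over.

Every vertex other than `a` has at most one literal neighbour; this keeps `a` and pairs of
opposite literal vertices off every 4-cycle. A connector cannot lie on one either, since its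
neighbours `ℓ_i` and `(e,i)` have no further common neighbour when the variables of `e` are
distinct. Distinctness of variables also rules out the remaining shapes, cycles through literal
and clause position vertices only.
-/

namespace Fin

theorem eq_or_eq_or_eq_of_ne_of_ne_of_ne {x y z : Fin 3} (hxy : x ≠ y) (hxz : x ≠ z)
    (hyz : y ≠ z) (k : Fin 3) : k = x ∨ k = y ∨ k = z := by
  revert x y z k; decide

theorem eq_of_ne_of_ne_of_iff {k x y : Fin 3} (hx : x ≠ k) (hy : y ≠ k)
    (h : x = k + 1 ↔ y = k + 1) : x = y := by
  revert k x y; decide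

theorem eq_add_one_iff_not_of_ne {k x y : Fin 3} (hx : x ≠ k) (hy : y ≠ k) (hxy : x ≠ y) :
    x = k + 1 ↔ ¬y = k + 1 := by
  revert k x y; decide

theorem neg_add_ne_left {x y : Fin 3} (h : x ≠ y) : -(x + y) ≠ x := by
  revert x y; decide

theorem neg_add_ne_right {x y : Fin 3} (h : x ≠ y) : -(x + y) ≠ y := by
  revert x y; decide

end Fin

def boolColour (b : Bool) : Fin 3 := if b then 0 else 1

theorem boolColour_injective : Function.Injective boolColour := by decide

theorem boolColour_ne_two (b : Bool) : boolColour b ≠ 2 := by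
  cases b <;> decide

theorem exists_injective_ne_boolColour (b : Fin 3 → Bool) (hb : ¬(b 0 = b 1 ∧ b 1 = b 2)) :
    ∃ p : Fin 3 → Fin 3, Function.Injective p ∧ ∀ i, p i ≠ boolColour (b i) := by
  revert b; decide

namespace SimpleGraph

variable {V : Type*} (G : SimpleGraph V)

structure IsFourCycle (u₀ u₁ u₂ u₃ : V) : Prop where
  ne₀₂ : u₀ ≠ u₂
  ne₁₃ : u₁ ≠ u₃
  adj₀₁ : G.Adj u₀ u₁
  adj₁₂ : G.Adj u₁ u₂
  adj₂₃ : G.Adj u₂ u₃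
  adj₃₀ : G.Adj u₃ u₀

variable {G} {u₀ u₁ u₂ u₃ : V}

theorem IsFourCycle.rotate (h : G.IsFourCycle u₀ u₁ u₂ u₃) : G.IsFourCycle u₁ u₂ u₃ u₀ :=
  ⟨h.ne₁₃, h.ne₀₂.symm, h.adj₁₂, h.adj₂₃, h.adj₃₀, h.adj₀₁⟩

theorem IsFourCycle.reflect (h : G.IsFourCycle u₀ u₁ u₂ u₃) : G.IsFourCycle u₀ u₃ u₂ u₁ :=
  ⟨h.ne₀₂, h.ne₁₃.symm, h.adj₃₀.symm, h.adj₂₃.symm, h.adj₁₂.symm, h.adj₀₁.symm⟩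

end SimpleGraph

open SimpleGraph

section

variable {X : Type} {I : Finset (NClause X)}

theorem nlitVal_ne_of_ne (ν : X → Bool) (v : X) {s s' : Bool} (h : s ≠ s') :
    nlitVal ν (v, s) ≠ nlitVal ν (v, s') := by
  cases s <;> cases s' <;> simp_all [nlitVal]

def ClausesHaveDistinctVars (I : Finset (NClause X)) : Prop :=
  ∀ e ∈ I, ∀ i j : Fin 3, i ≠ j → (e i).1 ≠ (e j).1

theorem ClausesHaveDistinctVars.eq_of_var_eq (hI : ClausesHaveDistinctVars I)
    (e : {e // e ∈ I}) {i j : Fin 3} (h : (e.1 i).1 = (e.1 j).1) : i = j := by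
  by_contra hij
  exact hI e.1 e.2 i j hij h

namespace GVert

abbrev special : GVert I := Sum.inl ()

abbrev lit (l : NLit X) : GVert I := Sum.inr (Sum.inl l)

abbrev pos (e : {e // e ∈ I}) (i : Fin 3) : GVert I := Sum.inr (Sum.inr (Sum.inl (e, i)))

abbrev conn (e : {e // e ∈ I}) (i : Fin 3) : GVert I := Sum.inr (Sum.inr (Sum.inr (e, i)))

end GVert

open GVert

namespace GI

theorem adj_iff (u v : GVert I) : (GI I).Adj u v ↔ u ≠ v ∧ (gRel I u v ∨ gRel I v u) :=
  fromRel_adj _ _ _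

theorem adj_special_lit (l : NLit X) : (GI I).Adj special (lit l) := by
  simp [GI, gRel]

theorem adj_special_iff {u : GVert I} : (GI I).Adj special u ↔ ∃ l, u = lit l := by
  rcases u with _ | l | _ | _ <;> simp [GI, gRel]

theorem adj_lit_lit {l l' : NLit X} :
    (GI I).Adj (lit l) (lit l') ↔ l.1 = l'.1 ∧ l.2 ≠ l'.2 := by
  simp only [GI, fromRel_adj, gRel, ne_eq, Sum.inr.injEq, Sum.inl.injEq]
  grind

theorem adj_lit_pos {l : NLit X} {e : {e // e ∈ I}} {i : Fin 3} :
    (GI I).Adj (lit l) (pos e i) ↔ l = e.1 i := by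
  simp [GI, gRel]

theorem adj_lit_conn {l : NLit X} {e : {e // e ∈ I}} {i : Fin 3} :
    (GI I).Adj (lit l) (conn e i) ↔ l = e.1 i := by
  simp [GI, gRel]

theorem adj_pos_pos {e e' : {e // e ∈ I}} {i i' : Fin 3} :
    (GI I).Adj (pos e i) (pos e' i') ↔ e = e' ∧ i ≠ i' := by
  simp only [GI, fromRel_adj, gRel, ne_eq, Sum.inr.injEq, Sum.inl.injEq, Prod.mk.injEq]
  grind

theorem adj_conn_pos {e e' : {e // e ∈ I}} {i i' : Fin 3} :
    (GI I).Adj (conn e i) (pos e' i') ↔ e = e' ∧ i = i' := by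
  simp [GI, gRel]

theorem adj_conn_iff {e : {e // e ∈ I}} {i : Fin 3} {u : GVert I} :
    (GI I).Adj (conn e i) u ↔ u = lit (e.1 i) ∨ u = pos e i := by
  rcases u with _ | l | ⟨e', i'⟩ | ⟨e', i'⟩ <;> simp [GI, gRel, eq_comm]

theorem exists_naeSat_of_colouring (c : GVert I → Fin 3)
    (hc : ∀ u v, (GI I).Adj u v → c u ≠ c v) : ∃ ν, NAESat3 I ν := by
  set k := c special
  let ν : X → Bool := fun x => c (lit (x, true)) = k + 1
  have hk : ∀ l, c (lit l) ≠ k := fun l => (hc _ _ (adj_special_lit l)).symm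
  have hval : ∀ l, nlitVal ν l = true ↔ c (lit l) = k + 1 := by
    rintro ⟨x, _ | _⟩
    · have hne := hc _ _ (adj_lit_lit.2 ⟨rfl, by simp⟩ :
        (GI I).Adj (lit (x, true)) (lit (x, false)))
      simpa [nlitVal, ν] using (Fin.eq_add_one_iff_not_of_ne (hk _) (hk _) hne.symm).symm
    · simp [nlitVal, ν]
  have hcol : ∀ l l', nlitVal ν l = nlitVal ν l' → c (lit l) = c (lit l') := fun l l' h =>
    Fin.eq_of_ne_of_ne_of_iff (hk l) (hk l') (by rw [← hval, ← hval, h])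
  refine ⟨ν, fun e he ⟨h₀₁, h₁₂⟩ => ?_⟩
  let e' : {e // e ∈ I} := ⟨e, he⟩
  -- the three literals of `e` share one colour, which the clause triangle then has to avoid
  have hpos : ∀ i, c (pos e' i) ≠ c (lit (e 0)) := by
    intro i
    have hcol_i : c (lit (e i)) = c (lit (e 0)) := by
      fin_cases i
      · rfl
      · exact hcol _ _ h₀₁.symm
      · exact hcol _ _ (h₁₂.symm.trans h₀₁.symm)
    exact hcol_i ▸ (hc _ _ (adj_lit_pos.2 rfl)).symm
  have hpp : ∀ i j : Fin 3, i ≠ j → c (pos e' i) ≠ c (pos e' j) :=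
    fun i j hij => hc _ _ (adj_pos_pos.2 ⟨rfl, hij⟩)
  rcases Fin.eq_or_eq_or_eq_of_ne_of_ne_of_ne (hpp 0 1 (by decide)) (hpp 0 2 (by decide))
      (hpp 1 2 (by decide)) (c (lit (e 0))) with h | h | h
  · exact hpos 0 h.symm
  · exact hpos 1 h.symm
  · exact hpos 2 h.symm

-- `-(x + y)` is the element of `Fin 3` other than `x ≠ y`, since `0 + 1 + 2 = 0`.
def naeColouring (ν : X → Bool) (p : {e // e ∈ I} → Fin 3 → Fin 3) : GVert I → Fin 3
  | Sum.inl _ => 2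
  | Sum.inr (Sum.inl l) => boolColour (nlitVal ν l)
  | Sum.inr (Sum.inr (Sum.inl (e, i))) => p e i
  | Sum.inr (Sum.inr (Sum.inr (e, i))) => -(boolColour (nlitVal ν (e.1 i)) + p e i)

theorem naeColouring_ne_of_gRel (ν : X → Bool) {p : {e // e ∈ I} → Fin 3 → Fin 3}
    (hp_inj : ∀ e, Function.Injective (p e)) (hp : ∀ e i, p e i ≠ boolColour (nlitVal ν (e.1 i)))
    {u v : GVert I} (hne : u ≠ v) (huv : gRel I u v) : naeColouring ν p u ≠ naeColouring ν p v := by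
  rcases u with _ | ⟨x, s⟩ | ⟨e, i⟩ | ⟨e, i⟩ <;>
    rcases v with _ | ⟨x', s'⟩ | ⟨e', i'⟩ | ⟨e', i'⟩ <;>
    simp only [gRel] at huv <;> try exact huv.elim
  · exact (boolColour_ne_two _).symm
  · obtain ⟨rfl, hs⟩ := huv
    exact boolColour_injective.ne (nlitVal_ne_of_ne ν x hs)
  · simp only [naeColouring, huv]
    exact (hp e' i').symm
  · simp only [naeColouring, huv]
    exact (Fin.neg_add_ne_left (hp e' i').symm).symm
  · subst huv
    exact (hp_inj e).ne fun hi => hne (hi ▸ rfl)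
  · obtain ⟨rfl, rfl⟩ := huv
    exact Fin.neg_add_ne_right (hp e i).symm

theorem exists_colouring_of_naeSat {ν : X → Bool} (hν : NAESat3 I ν) :
    ∃ c : GVert I → Fin 3, ∀ u v, (GI I).Adj u v → c u ≠ c v := by
  choose p hp_inj hp using fun e : {e // e ∈ I} =>
    exists_injective_ne_boolColour (fun i => nlitVal ν (e.1 i)) (hν e.1 e.2)
  refine ⟨naeColouring ν p, fun u v h => ?_⟩
  obtain ⟨hne, huv | hvu⟩ := (adj_iff u v).1 h
  · exact naeColouring_ne_of_gRel ν hp_inj hp hne huv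
  · exact (naeColouring_ne_of_gRel ν hp_inj hp hne.symm hvu).symm

theorem exists_adj_adj_of_gRel {u v : GVert I} (hne : u ≠ v) (huv : gRel I u v) :
    ∃ w, (GI I).Adj u w ∧ (GI I).Adj v w := by
  rcases u with _ | ⟨x, s⟩ | ⟨e, i⟩ | ⟨e, i⟩ <;>
    rcases v with _ | ⟨x', s'⟩ | ⟨e', i'⟩ | ⟨e', i'⟩ <;>
    simp only [gRel] at huv <;> try exact huv.elim
  · exact ⟨lit (x', !s'), adj_special_lit _, adj_lit_lit.2 ⟨rfl, by simp⟩⟩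
  · exact ⟨special, (adj_special_lit _).symm, (adj_special_lit _).symm⟩
  · exact ⟨conn e' i', adj_lit_conn.2 huv, (adj_conn_pos.2 ⟨rfl, rfl⟩).symm⟩
  · exact ⟨pos e' i', adj_lit_pos.2 huv, adj_conn_pos.2 ⟨rfl, rfl⟩⟩
  · subst huv
    have hthird : ∀ i i' : Fin 3, ∃ k, k ≠ i ∧ k ≠ i' := by decide
    obtain ⟨k, hki, hki'⟩ := hthird i i'
    exact ⟨pos e k, adj_pos_pos.2 ⟨rfl, hki.symm⟩, adj_pos_pos.2 ⟨rfl, hki'.symm⟩⟩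
  · obtain ⟨rfl, rfl⟩ := huv
    exact ⟨lit (e.1 i), (adj_lit_conn.2 rfl).symm, (adj_lit_pos.2 rfl).symm⟩

theorem exists_adj_adj_of_adj {u v : GVert I} (h : (GI I).Adj u v) :
    ∃ w, (GI I).Adj u w ∧ (GI I).Adj v w := by
  obtain ⟨hne, huv | hvu⟩ := (adj_iff u v).1 h
  · exact exists_adj_adj_of_gRel hne huv
  · obtain ⟨w, hvw, huw⟩ := exists_adj_adj_of_gRel hne.symm hvu
    exact ⟨w, huw, hvw⟩

theorem lit_eq_of_adj_lit {u : GVert I} (hu : u ≠ special) {l l' : NLit X}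
    (h : (GI I).Adj u (lit l)) (h' : (GI I).Adj u (lit l')) : l = l' := by
  rcases u with _ | ⟨v, s⟩ | ⟨e, i⟩ | ⟨e, i⟩
  · exact absurd rfl hu
  · rw [adj_lit_lit] at h h'
    obtain ⟨hv, hs⟩ := h
    obtain ⟨hv', hs'⟩ := h'
    exact Prod.ext (hv.symm.trans hv') (by cases s <;> simp_all)
  · rw [adj_comm, adj_lit_pos] at h h'
    rw [h, h']
  · rw [adj_comm, adj_lit_conn] at h h'
    rw [h, h']

variable {u₀ u₁ u₂ u₃ : GVert I}

theorem not_isFourCycle_special : ¬(GI I).IsFourCycle special u₁ u₂ u₃ := by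
  intro h
  obtain ⟨l₁, rfl⟩ := adj_special_iff.1 h.adj₀₁
  obtain ⟨l₃, rfl⟩ := adj_special_iff.1 h.adj₃₀.symm
  exact h.ne₁₃ (congrArg lit (lit_eq_of_adj_lit h.ne₀₂.symm h.adj₁₂.symm h.adj₂₃))

theorem not_isFourCycle_lit_lit_opposite {l l' : NLit X} :
    ¬(GI I).IsFourCycle (lit l) u₁ (lit l') u₃ := by
  intro h
  have hu₁ : u₁ ≠ special := fun hu => not_isFourCycle_special (hu ▸ h.rotate)
  exact h.ne₀₂ (congrArg lit (lit_eq_of_adj_lit hu₁ h.adj₀₁.symm h.adj₁₂))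

theorem not_isFourCycle_conn_lit_pos (hI : ClausesHaveDistinctVars I) {e : {e // e ∈ I}}
    {i : Fin 3} : ¬(GI I).IsFourCycle (conn e i) (lit (e.1 i)) u₂ (pos e i) := by
  intro h
  rcases u₂ with _ | l | ⟨e', j⟩ | ⟨e', j⟩
  · exact not_isFourCycle_special h.rotate.rotate
  · exact h.adj₁₂.ne (congrArg lit (adj_lit_pos.1 h.adj₂₃).symm)
  · obtain ⟨rfl, hji⟩ := adj_pos_pos.1 h.adj₂₃
    exact hji (hI.eq_of_var_eq e' (congrArg Prod.fst (adj_lit_pos.1 h.adj₁₂)).symm)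
  · obtain ⟨rfl, rfl⟩ := adj_conn_pos.1 h.adj₂₃
    exact h.ne₀₂ rfl

theorem not_isFourCycle_conn (hI : ClausesHaveDistinctVars I) {e : {e // e ∈ I}}
    {i : Fin 3} : ¬(GI I).IsFourCycle (conn e i) u₁ u₂ u₃ := by
  intro h
  rcases adj_conn_iff.1 h.adj₀₁ with rfl | rfl <;>
    rcases adj_conn_iff.1 h.adj₃₀.symm with rfl | rfl
  · exact h.ne₁₃ rfl
  · exact not_isFourCycle_conn_lit_pos hI h
  · exact not_isFourCycle_conn_lit_pos hI h.reflect
  · exact h.ne₁₃ rfl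

theorem eq_lit_or_eq_pos_of_isFourCycle (hI : ClausesHaveDistinctVars I)
    (h : (GI I).IsFourCycle u₀ u₁ u₂ u₃) :
    (∃ l, u₀ = lit l) ∨ ∃ e i, u₀ = pos e i := by
  rcases u₀ with _ | l | ⟨e, i⟩ | ⟨e, i⟩
  · exact absurd h not_isFourCycle_special
  · exact Or.inl ⟨l, rfl⟩
  · exact Or.inr ⟨e, i, rfl⟩
  · exact absurd h (not_isFourCycle_conn hI)

theorem not_isFourCycle_lit_pos_pos_pos (hI : ClausesHaveDistinctVars I) {l : NLit X}
    {e₁ e₂ e₃ : {e // e ∈ I}} {i₁ i₂ i₃ : Fin 3} :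
    ¬(GI I).IsFourCycle (lit l) (pos e₁ i₁) (pos e₂ i₂) (pos e₃ i₃) := by
  intro h
  obtain ⟨rfl, -⟩ := adj_pos_pos.1 h.adj₁₂
  obtain ⟨rfl, -⟩ := adj_pos_pos.1 h.adj₂₃
  have hl₁ := adj_lit_pos.1 h.adj₀₁
  have hl₃ := adj_lit_pos.1 h.adj₃₀.symm
  obtain rfl := hI.eq_of_var_eq e₁ (congrArg Prod.fst (hl₁.symm.trans hl₃))
  exact h.ne₁₃ rfl

theorem not_isFourCycle_lit_lit_pos_pos (hI : ClausesHaveDistinctVars I) {l l' : NLit X}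
    {e₂ e₃ : {e // e ∈ I}} {i₂ i₃ : Fin 3} :
    ¬(GI I).IsFourCycle (lit l) (lit l') (pos e₂ i₂) (pos e₃ i₃) := by
  intro h
  obtain ⟨hv, hs⟩ := adj_lit_lit.1 h.adj₀₁
  obtain ⟨rfl, -⟩ := adj_pos_pos.1 h.adj₂₃
  have hl' := adj_lit_pos.1 h.adj₁₂
  have hl := adj_lit_pos.1 h.adj₃₀.symm
  obtain rfl : i₂ = i₃ := hI.eq_of_var_eq e₂ (by rw [← hl', ← hl, hv])
  exact hs (by rw [hl, hl'])

theorem not_isFourCycle_pos {e₀ e₁ e₂ e₃ : {e // e ∈ I}} {i₀ i₁ i₂ i₃ : Fin 3} :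
    ¬(GI I).IsFourCycle (pos e₀ i₀) (pos e₁ i₁) (pos e₂ i₂) (pos e₃ i₃) := by
  intro h
  obtain ⟨rfl, h₀₁⟩ := adj_pos_pos.1 h.adj₀₁
  obtain ⟨rfl, h₁₂⟩ := adj_pos_pos.1 h.adj₁₂
  obtain ⟨rfl, h₂₃⟩ := adj_pos_pos.1 h.adj₂₃
  obtain ⟨-, h₃₀⟩ := adj_pos_pos.1 h.adj₃₀
  have h₀₂ : i₀ ≠ i₂ := fun hi => h.ne₀₂ (hi ▸ rfl)
  have h₁₃ : i₁ ≠ i₃ := fun hi => h.ne₁₃ (hi ▸ rfl)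
  rcases Fin.eq_or_eq_or_eq_of_ne_of_ne_of_ne h₀₁ h₀₂ h₁₂ i₃ with rfl | rfl | rfl
  · exact h₃₀ rfl
  · exact h₁₃ rfl
  · exact h₂₃ rfl

theorem not_isFourCycle (hI : ClausesHaveDistinctVars I) :
    ¬(GI I).IsFourCycle u₀ u₁ u₂ u₃ := by
  intro h
  rcases eq_lit_or_eq_pos_of_isFourCycle hI h with ⟨_, rfl⟩ | ⟨_, _, rfl⟩ <;>
    rcases eq_lit_or_eq_pos_of_isFourCycle hI h.rotate with ⟨_, rfl⟩ | ⟨_, _, rfl⟩ <;>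
    rcases eq_lit_or_eq_pos_of_isFourCycle hI h.rotate.rotate with ⟨_, rfl⟩ | ⟨_, _, rfl⟩ <;>
    rcases eq_lit_or_eq_pos_of_isFourCycle hI h.rotate.rotate.rotate with ⟨_, rfl⟩ | ⟨_, _, rfl⟩
  -- up to rotation, the literal vertices form one of the shapes excluded above
  all_goals first
    | exact not_isFourCycle_pos h
    | exact not_isFourCycle_lit_lit_opposite h
    | exact not_isFourCycle_lit_lit_opposite h.rotate
    | exact not_isFourCycle_lit_pos_pos_pos hI h
    | exact not_isFourCycle_lit_pos_pos_pos hI h.rotate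
    | exact not_isFourCycle_lit_pos_pos_pos hI h.rotate.rotate
    | exact not_isFourCycle_lit_pos_pos_pos hI h.rotate.rotate.rotate
    | exact not_isFourCycle_lit_lit_pos_pos hI h
    | exact not_isFourCycle_lit_lit_pos_pos hI h.rotate
    | exact not_isFourCycle_lit_lit_pos_pos hI h.rotate.rotate
    | exact not_isFourCycle_lit_lit_pos_pos hI h.rotate.rotate.rotate

end GI

end

theorem stmt_10 {X : Type} (I : Finset (NClause X))
    (hdist : ∀ e ∈ I, ∀ i j : Fin 3, i ≠ j → (e i).1 ≠ (e j).1) :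
    -- (a)
    ((∃ c : GVert I → Fin 3, ∀ u v, (GI I).Adj u v → c u ≠ c v) ↔
      ∃ ν : X → Bool, NAESat3 I ν) ∧
    -- (b)
    (∀ u v : GVert I, (GI I).Adj u v →
      ∃ w : GVert I, (GI I).Adj u w ∧ (GI I).Adj v w) ∧
    -- (c)
    ¬ ∃ u₀ u₁ u₂ u₃ : GVert I,
        u₀ ≠ u₁ ∧ u₀ ≠ u₂ ∧ u₀ ≠ u₃ ∧ u₁ ≠ u₂ ∧ u₁ ≠ u₃ ∧ u₂ ≠ u₃ ∧
        (GI I).Adj u₀ u₁ ∧ (GI I).Adj u₁ u₂ ∧ (GI I).Adj u₂ u₃ ∧ (GI I).Adj u₃ u₀ := by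
  refine ⟨⟨fun ⟨c, hc⟩ => GI.exists_naeSat_of_colouring c hc,
    fun ⟨_, hν⟩ => GI.exists_colouring_of_naeSat hν⟩, fun _ _ => GI.exists_adj_adj_of_adj, ?_⟩
  rintro ⟨u₀, u₁, u₂, u₃, -, h₀₂, -, -, h₁₃, -, h₀₁, h₁₂, h₂₃, h₃₀⟩
  exact GI.not_isFourCycle hdist ⟨h₀₂, h₁₃, h₀₁, h₁₂, h₂₃, h₃₀⟩
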